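/- Let D^s ∈ ℝ^{d_s×d_s}, D^f ∈ ℝ^{d_f×d_f}, and for each n ∈ ℕ let M_n ∈ ℝ^{d_f×d_s} be arbitrary. Define the block lower-triangular matrices T_n = [[I + Δt D^s, 0],[M_n, I + δt D^f]]. If ρ(I + Δt D^s) < 1 and ρ(I + δt D^f) < 1 and sup_n ‖M_n‖ < ∞, then for any μ_0 ∈ ℝ^{d}, the sequence μ_{n+1} = T_n μ_n converges to 0. -/

import Mathlib

/-!
By Gelfand's formula, `ρ(a) < 1` forces `‖a ^ k‖ ≤ r ^ k` eventually for some `r < 1`, so the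
powers of both diagonal blocks are absolutely summable. The slow component then obeys
`x (k + 1) = A x k` and the fast one `y (k + 1) = D y k + C k x k`. Unrolling a recursion
`y (k + 1) = B y k + f k` writes `y (k + 1)` as `B ^ (k + 1) y 0` plus the Cauchy product of
`(B ^ j)` with `(f j)`, and a Cauchy product of two absolutely summable sequences is absolutely
summable. Hence `‖x k‖` is summable, so is `‖C k x k‖` because the `C k` are bounded, and then
so is `‖y k‖`; the terms of a summable series tend to `0`.
-/

open Matrix Filter Finset

attribute [local instance] Matrix.frobeniusNormedAddCommGroup

theorem spectrum.summable_norm_pow_of_spectralRadius_lt_one {A : Type*} [NormedRing A]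
    [NormedAlgebra ℂ A] [CompleteSpace A] {a : A} (h : spectralRadius ℂ a < 1) :
    Summable fun k => ‖a ^ k‖ := by
  obtain ⟨r, hr0, hρr, hr1⟩ := ENNReal.lt_iff_exists_real_btwn.mp h
  have hr_pos : 0 < r := ENNReal.ofReal_pos.mp (pos_of_gt hρr)
  have hroot : ∀ᶠ k : ℕ in atTop, ‖a ^ k‖ ^ (1 / k : ℝ) < r := by
    filter_upwards [(pow_norm_pow_one_div_tendsto_nhds_spectralRadius a).eventually_lt_const hρr]
      with k hk
    exact (ENNReal.ofReal_lt_ofReal_iff hr_pos).mp hk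
  refine (summable_geometric_of_lt_one hr0 (by simpa using hr1)).of_norm_bounded_eventually_nat ?_
  filter_upwards [hroot, eventually_ne_atTop 0] with k hk hk0
  rw [norm_norm, ← Real.rpow_inv_natCast_pow (norm_nonneg (a ^ k)) hk0, ← one_div]
  exact pow_le_pow_left₀ (by positivity) hk.le k

namespace Matrix

variable {m n ι : Type*} [Fintype m] [Fintype n] [Fintype ι] [DecidableEq ι]

theorem summable_norm_pow_of_spectralRadius_map_lt_one {A : Matrix ι ι ℝ}
    (h : spectralRadius ℂ (A.map (Complex.ofReal : ℝ → ℂ)) < 1) :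
    Summable fun k => ‖A ^ k‖ := by
  let _ : NormedRing (Matrix ι ι ℂ) := frobeniusNormedRing
  let _ : NormedAlgebra ℂ (Matrix ι ι ℂ) := frobeniusNormedAlgebra
  convert spectrum.summable_norm_pow_of_spectralRadius_lt_one h using 2 with k
  have hmap : A.map Complex.ofReal ^ k = (A ^ k).map Complex.ofReal :=
    (map_pow Complex.ofRealHom.mapMatrix A k).symm
  rw [hmap, frobenius_norm_map_eq _ _ Complex.norm_real]

theorem norm_entry_le_frobenius_norm {α : Type*} [NormedAddCommGroup α] (A : Matrix m n α)
    (i : m) (j : n) : ‖A i j‖ ≤ ‖A‖ :=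
  calc ‖A i j‖ ≤ ‖WithLp.toLp 2 (A i)‖ := PiLp.norm_apply_le (WithLp.toLp 2 (A i)) j
    _ ≤ ‖A‖ := PiLp.norm_apply_le (WithLp.toLp 2 fun i => WithLp.toLp 2 (A i)) i

theorem norm_mulVec_le_card_mul (A : Matrix m n ℝ) (v : n → ℝ) :
    ‖A *ᵥ v‖ ≤ Fintype.card n * ‖A‖ * ‖v‖ := by
  refine pi_norm_le_iff_of_nonneg (by positivity) |>.mpr fun i => ?_
  calc ‖(A *ᵥ v) i‖ ≤ ∑ j, ‖A i j‖ * ‖v j‖ :=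
        (norm_sum_le _ _).trans (sum_le_sum fun j _ => norm_mul_le _ _)
    _ ≤ ∑ _j : n, ‖A‖ * ‖v‖ := by
        gcongr with j; exacts [A.norm_entry_le_frobenius_norm i j, norm_le_pi_norm v j]
    _ = Fintype.card n * ‖A‖ * ‖v‖ := by simp [mul_assoc]

theorem eq_pow_mulVec_add_sum {R : Type*} [Semiring R] {B : Matrix ι ι R} {y f : ℕ → ι → R}
    (h : ∀ k, y (k + 1) = B *ᵥ y k + f k) (k : ℕ) :
    y (k + 1) = B ^ (k + 1) *ᵥ y 0 + ∑ j ∈ range (k + 1), B ^ (k - j) *ᵥ f j := by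
  induction k with
  | zero => simp [h 0]
  | succ k ih =>
    rw [h (k + 1), ih, mulVec_add, mulVec_mulVec, ← pow_succ', mulVec_sum,
      sum_range_succ _ (k + 1), Nat.sub_self, pow_zero, one_mulVec, add_assoc]
    congr 2
    refine sum_congr rfl fun j hj => ?_
    rw [mulVec_mulVec, ← pow_succ', Nat.sub_add_comm (mem_range_succ_iff.mp hj)]

theorem summable_norm_of_recursion {B : Matrix ι ι ℝ} (hB : Summable fun k => ‖B ^ k‖)
    {y f : ℕ → ι → ℝ} (hf : Summable fun k => ‖f k‖) (h : ∀ k, y (k + 1) = B *ᵥ y k + f k) :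
    Summable fun k => ‖y k‖ := by
  have hconv : Summable fun k =>
      ∑ j ∈ range (k + 1), ‖f j‖ * (Fintype.card ι * ‖B ^ (k - j)‖) :=
    summable_sum_mul_range_of_summable_mul (f := fun j => ‖f j‖)
      (g := fun j => (Fintype.card ι : ℝ) * ‖B ^ j‖) <|
      hf.mul_of_nonneg (hB.mul_left _) (fun _ => norm_nonneg _) fun _ => by positivity
  have hpow : Summable fun k => ‖B ^ (k + 1)‖ * (Fintype.card ι * ‖y 0‖) :=
    ((summable_nat_add_iff 1).mpr hB).mul_right _
  rw [← summable_nat_add_iff 1]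
  refine (hpow.add hconv).of_nonneg_of_le (fun _ => norm_nonneg _) fun k => ?_
  rw [eq_pow_mulVec_add_sum h k]
  refine (norm_add_le _ _).trans
    (add_le_add ?_ ((norm_sum_le _ _).trans (sum_le_sum fun j _ => ?_)))
  · exact (norm_mulVec_le_card_mul _ _).trans_eq (by ring)
  · exact (norm_mulVec_le_card_mul _ _).trans_eq (by ring)

theorem summable_norm_of_recursion_fromBlocks [DecidableEq m] [DecidableEq n]
    {A : Matrix m m ℝ} {D : Matrix n n ℝ} (hA : Summable fun k => ‖A ^ k‖)
    (hD : Summable fun k => ‖D ^ k‖) {C : ℕ → Matrix n m ℝ} {c : ℝ} (hC : ∀ k, ‖C k‖ ≤ c)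
    {μ : ℕ → m ⊕ n → ℝ} (h : ∀ k, μ (k + 1) = fromBlocks A 0 (C k) D *ᵥ μ k) :
    Summable fun k => ‖μ k‖ := by
  let x k := μ k ∘ Sum.inl
  let y k := μ k ∘ Sum.inr
  have hμ : ∀ k, μ (k + 1) = Sum.elim (A *ᵥ x k) (C k *ᵥ x k + D *ᵥ y k) := fun k => by
    rw [h k, fromBlocks_mulVec, zero_mulVec, add_zero]
  have hx_rec : ∀ k, x (k + 1) = A *ᵥ x k + 0 := fun k => by
    simp only [x, hμ k, Sum.elim_comp_inl, add_zero]
  have hy_rec : ∀ k, y (k + 1) = D *ᵥ y k + C k *ᵥ x k := fun k => by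
    simp only [y, hμ k, Sum.elim_comp_inr, add_comm]
  have hx : Summable fun k => ‖x k‖ := summable_norm_of_recursion hA (by simp) hx_rec
  have hCx : Summable fun k => ‖C k *ᵥ x k‖ :=
    (hx.mul_left (Fintype.card m * c)).of_nonneg_of_le (fun _ => norm_nonneg _) fun k =>
      (norm_mulVec_le_card_mul _ _).trans (by gcongr; exact hC k)
  have hy : Summable fun k => ‖y k‖ := summable_norm_of_recursion hD hCx hy_rec
  refine (hx.add hy).of_nonneg_of_le (fun _ => norm_nonneg _) fun k => ?_
  refine pi_norm_le_iff_of_nonneg (by positivity) |>.mpr ?_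
  rintro (i | i)
  · exact (norm_le_pi_norm (x k) i).trans (le_add_of_nonneg_right (norm_nonneg _))
  · exact (norm_le_pi_norm (y k) i).trans (le_add_of_nonneg_left (norm_nonneg _))

end Matrix

/-- For block lower-triangular matrices
`T_n = [[I + Δt D^s, 0],[M_n, I + δt D^f]]` with `ρ(I + Δt D^s) < 1`, `ρ(I + δt D^f) < 1`
and uniformly bounded off-diagonal blocks `M_n`, the recursion `μ_{n+1} = T_n μ_n`
converges to `0` for every initial vector `μ_0`. -/
theorem stmt11 {ds df : ℕ} (Ds : Matrix (Fin ds) (Fin ds) ℝ)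
    (Df : Matrix (Fin df) (Fin df) ℝ) (M : ℕ → Matrix (Fin df) (Fin ds) ℝ)
    (Δt δt : ℝ)
    (hρs : spectralRadius ℂ ((1 + Δt • Ds).map (Complex.ofReal : ℝ → ℂ)) < 1)
    (hρf : spectralRadius ℂ ((1 + δt • Df).map (Complex.ofReal : ℝ → ℂ)) < 1)
    (hM : ∃ c : ℝ, ∀ n : ℕ, ‖M n‖ ≤ c)
    (μ : ℕ → (Fin ds ⊕ Fin df → ℝ))
    (hrec : ∀ n : ℕ,
      μ (n + 1) = (Matrix.fromBlocks (1 + Δt • Ds) 0 (M n) (1 + δt • Df)) *ᵥ μ n) :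
    Tendsto μ atTop (nhds 0) := by
  obtain ⟨c, hc⟩ := hM
  have hμ : Summable fun n => ‖μ n‖ := summable_norm_of_recursion_fromBlocks
    (summable_norm_pow_of_spectralRadius_map_lt_one hρs)
    (summable_norm_pow_of_spectralRadius_map_lt_one hρf) hc hrec
  exact tendsto_zero_iff_norm_tendsto_zero.mpr hμ.tendsto_atTop_zero
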